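/- arXiv:2208.06152 — 7 statements merged into one kernel-verified Lean document; each statement's English description precedes it below -/
import Mathlib

section
/- Let B, G be symmetric positive definite, ρ > 0, H = ((1/ρ)G + Sᵀ A B⁻¹ Aᵀ S)⁻¹, F = ((1/ρ)B + Aᵀ S G⁻¹ Sᵀ A)⁻¹, and W = Sᵀ A F Aᵀ S. Then G H G = ρ G − ρ W. -/
/-!
With `U = Sᵀ A`, the Woodbury identity for `ρ⁻¹ G + U B⁻¹ Uᵀ` has capacitance matrix
`B + ρ Uᵀ G⁻¹ U = ρ F⁻¹`, which gives `H = ρ G⁻¹ - ρ G⁻¹ U F Uᵀ G⁻¹`; multiplying by `G` on both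
sides yields the identity. The capacitance matrix is invertible because `F⁻¹` is positive
definite.
-/

open Matrix

namespace Matrix

variable {K n p : Type*} [Field K] [Fintype n] [DecidableEq n] [Fintype p] [DecidableEq p]

theorem inv_smul_of_ne_zero {c : K} (hc : c ≠ 0) (A : Matrix n n K) : (c • A)⁻¹ = c⁻¹ • A⁻¹ := by
  by_cases hA : IsUnit A.det
  · exact inv_smul' A (Units.mk0 c hc) hA
  · have hcA : ¬IsUnit (c • A).det := by
      rwa [det_smul, IsUnit.mul_iff, not_and_or, or_iff_right (by simpa using pow_ne_zero _ hc)]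
    rw [nonsing_inv_apply_not_isUnit _ hA, nonsing_inv_apply_not_isUnit _ hcA, smul_zero]

theorem mul_inv_smul_add_mul_inv_mul_mul_eq_sub
    (G : Matrix p p K) (B : Matrix n n K) (U : Matrix p n K) (V : Matrix n p K) {c : K}
    (hc : c ≠ 0) (hG : IsUnit G) (hB : IsUnit B) (hN : IsUnit (c⁻¹ • B + V * G⁻¹ * U)) :
    G * (c⁻¹ • G + U * B⁻¹ * V)⁻¹ * G = c • G - c • (U * (c⁻¹ • B + V * G⁻¹ * U)⁻¹ * V) := by
  set N := c⁻¹ • B + V * G⁻¹ * U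
  have hGdet := (isUnit_iff_isUnit_det G).1 hG
  have hcapacitance : B⁻¹⁻¹ + V * (c⁻¹ • G)⁻¹ * U = c • N := by
    rw [inv_smul_of_ne_zero (inv_ne_zero hc), inv_inv,
      nonsing_inv_nonsing_inv _ ((isUnit_iff_isUnit_det B).1 hB)]
    simp [N, smul_add, smul_smul, hc, Matrix.mul_smul, Matrix.smul_mul]
  have hcG : IsUnit (c⁻¹ • G) := hG.smul (Units.mk0 c⁻¹ (inv_ne_zero hc))
  have hcN : IsUnit (c • N) := hN.smul (Units.mk0 c hc)
  rw [add_mul_mul_inv_eq_sub _ _ _ _ hcG (isUnit_nonsing_inv_iff.2 hB) (hcapacitance ▸ hcN), hcapacitance,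
    inv_smul_of_ne_zero hc, inv_smul_of_ne_zero (inv_ne_zero hc), inv_inv]
  simp only [Matrix.mul_sub, Matrix.sub_mul, Matrix.smul_mul, Matrix.mul_smul, smul_smul,
    ← Matrix.mul_assoc, mul_nonsing_inv _ hGdet, Matrix.one_mul]
  simp [Matrix.mul_assoc, nonsing_inv_mul _ hGdet, hc]

end Matrix

theorem stmt_3 {m n p : ℕ} (A : Matrix (Fin m) (Fin n) ℝ) (S : Matrix (Fin m) (Fin p) ℝ)
    (B : Matrix (Fin n) (Fin n) ℝ) (G : Matrix (Fin p) (Fin p) ℝ)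
    (hB : B.PosDef) (hG : G.PosDef) (ρ : ℝ) (hρ : 0 < ρ) :
    let H := (ρ⁻¹ • G + Sᵀ * A * B⁻¹ * Aᵀ * S)⁻¹
    let F := (ρ⁻¹ • B + Aᵀ * S * G⁻¹ * Sᵀ * A)⁻¹
    let W := Sᵀ * A * F * Aᵀ * S
    G * H * G = ρ • G - ρ • W := by
  intro H F W
  have hN : (ρ⁻¹ • B + (Sᵀ * A)ᴴ * G⁻¹ * (Sᵀ * A)).PosDef :=
    (hB.smul (inv_pos.2 hρ)).add_posSemidef (hG.posSemidef.inv.conjTranspose_mul_mul_same _)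
  simpa only [H, F, W, conjTranspose_eq_transpose_of_trivial, transpose_mul, transpose_transpose,
    Matrix.mul_assoc] using mul_inv_smul_add_mul_inv_mul_mul_eq_sub G B (Sᵀ * A) (Sᵀ * A)ᴴ hρ.ne'
      hG.isUnit hB.isUnit hN.isUnit
end

section
/- Let B, G be symmetric positive definite, ρ > 0, H = ((1/ρ)G + Sᵀ A B⁻¹ Aᵀ S)⁻¹, and Z = Aᵀ S H Sᵀ A. Then Z B⁻¹ Z = Z − (1/ρ) Aᵀ S H G H Sᵀ A. -/
open Matrix

/-! With `M = ρ⁻¹ G + Sᵀ A B⁻¹ Aᵀ S`, positivity makes `M` invertible with `H = M⁻¹`, and the middle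
factor of `Z B⁻¹ Z` is `H (M - ρ⁻¹ G) H = H - ρ⁻¹ H G H`. -/

lemma Matrix.nonsing_inv_mul_sub_mul_nonsing_inv {ι R : Type*} [Fintype ι] [DecidableEq ι]
    [CommRing R] {M : Matrix ι ι R} (hM : IsUnit M) (C : Matrix ι ι R) :
    M⁻¹ * (M - C) * M⁻¹ = M⁻¹ - M⁻¹ * C * M⁻¹ := by
  rw [Matrix.mul_sub, nonsing_inv_mul M ((isUnit_iff_isUnit_det M).mp hM), Matrix.sub_mul,
    Matrix.one_mul]

lemma Matrix.PosDef.smul_add_transpose_mul_inv_mul {n p : Type*} [Fintype n] [DecidableEq n]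
    [Fintype p] {G : Matrix p p ℝ} {B : Matrix n n ℝ} (hG : G.PosDef) (hB : B.PosSemidef)
    {c : ℝ} (hc : 0 < c) (X : Matrix n p ℝ) : (c • G + Xᵀ * B⁻¹ * X).PosDef := by
  have hX : (Xᵀ * B⁻¹ * X).PosSemidef := by
    simpa only [conjTranspose_eq_transpose_of_trivial] using hB.inv.conjTranspose_mul_mul_same X
  exact (hG.smul hc).add_posSemidef hX

theorem stmt_5 {m n p : ℕ} (A : Matrix (Fin m) (Fin n) ℝ) (S : Matrix (Fin m) (Fin p) ℝ)
    (B : Matrix (Fin n) (Fin n) ℝ) (G : Matrix (Fin p) (Fin p) ℝ)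
    (hB : B.PosDef) (hG : G.PosDef) (ρ : ℝ) (hρ : 0 < ρ) :
    let H := (ρ⁻¹ • G + Sᵀ * A * B⁻¹ * Aᵀ * S)⁻¹
    let Z := Aᵀ * S * H * Sᵀ * A
    Z * B⁻¹ * Z = Z - ρ⁻¹ • (Aᵀ * S * H * G * H * Sᵀ * A) := by
  intro H Z
  set M := ρ⁻¹ • G + Sᵀ * A * B⁻¹ * Aᵀ * S
  have hM : M.PosDef := by
    simpa only [M, transpose_mul, transpose_transpose, Matrix.mul_assoc] using
      hG.smul_add_transpose_mul_inv_mul hB.posSemidef (inv_pos.mpr hρ) (Aᵀ * S)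
  have hK : Sᵀ * A * B⁻¹ * Aᵀ * S = M - ρ⁻¹ • G := (add_sub_cancel_left _ _).symm
  calc Z * B⁻¹ * Z = Aᵀ * S * (H * (Sᵀ * A * B⁻¹ * Aᵀ * S) * H) * Sᵀ * A := by
        simp only [Z, Matrix.mul_assoc]
    _ = Aᵀ * S * (H - H * (ρ⁻¹ • G) * H) * Sᵀ * A := by
        rw [hK, nonsing_inv_mul_sub_mul_nonsing_inv hM.isUnit]
    _ = Z - ρ⁻¹ • (Aᵀ * S * H * G * H * Sᵀ * A) := by
        simp only [Z, Matrix.mul_sub, Matrix.sub_mul, Matrix.mul_smul, Matrix.smul_mul,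
          Matrix.mul_assoc]
end

section
/- Let B, G be symmetric positive definite, ρ > 0, H = ((1/ρ)G + Sᵀ A B⁻¹ Aᵀ S)⁻¹, and Z = Aᵀ S H Sᵀ A. Then Aᵀ S H − Z B⁻¹ Aᵀ S H = (1/ρ) Aᵀ S H G H. -/
open Matrix

namespace Matrix

variable {n : Type*} [Fintype n]

theorem inv_sub_inv_mul_mul_inv [DecidableEq n] {K : Type*} [Field K] {M : Matrix n n K}
    (hM : IsUnit M.det) (N : Matrix n n K) : M⁻¹ - M⁻¹ * N * M⁻¹ = M⁻¹ * (M - N) * M⁻¹ := by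
  rw [Matrix.mul_sub, Matrix.sub_mul, nonsing_inv_mul M hM, Matrix.one_mul]

open scoped ComplexOrder in
theorem PosDef.smul_add_conjTranspose_mul_inv_mul {𝕜 : Type*} [RCLike 𝕜] {m : Type*} [Fintype m]
    [DecidableEq m] {G : Matrix n n 𝕜} {B : Matrix m m 𝕜} (hG : G.PosDef) (hB : B.PosDef)
    {c : ℝ} (hc : 0 < c) (C : Matrix m n 𝕜) : (c • G + Cᴴ * B⁻¹ * C).PosDef :=
  (hG.smul hc).add_posSemidef (hB.inv.posSemidef.conjTranspose_mul_mul_same C)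

end Matrix

theorem stmt_6 {m n p : ℕ} (A : Matrix (Fin m) (Fin n) ℝ) (S : Matrix (Fin m) (Fin p) ℝ)
    (B : Matrix (Fin n) (Fin n) ℝ) (G : Matrix (Fin p) (Fin p) ℝ)
    (hB : B.PosDef) (hG : G.PosDef) (ρ : ℝ) (hρ : 0 < ρ) :
    let H := (ρ⁻¹ • G + Sᵀ * A * B⁻¹ * Aᵀ * S)⁻¹
    let Z := Aᵀ * S * H * Sᵀ * A
    Aᵀ * S * H - Z * B⁻¹ * Aᵀ * S * H = ρ⁻¹ • (Aᵀ * S * H * G * H) := by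
  intro H Z
  set K := Sᵀ * A * B⁻¹ * Aᵀ * S
  have hK : K = (Aᵀ * S)ᴴ * B⁻¹ * (Aᵀ * S) := by
    simp only [K, conjTranspose_eq_transpose_of_trivial, transpose_mul, transpose_transpose,
      Matrix.mul_assoc]
  have hM : IsUnit (ρ⁻¹ • G + K).det := by
    rw [← isUnit_iff_isUnit_det, hK]
    exact (hG.smul_add_conjTranspose_mul_inv_mul hB (inv_pos.mpr hρ) _).isUnit
  have hHKH : H - H * K * H = H * (ρ⁻¹ • G) * H := by
    rw [inv_sub_inv_mul_mul_inv hM, add_sub_cancel_right]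
  calc Aᵀ * S * H - Z * B⁻¹ * Aᵀ * S * H = Aᵀ * S * (H - H * K * H) := by
        simp only [Z, K, Matrix.mul_sub, Matrix.mul_assoc]
    _ = ρ⁻¹ • (Aᵀ * S * H * G * H) := by
        rw [hHKH]; simp only [Matrix.mul_smul, Matrix.smul_mul, Matrix.mul_assoc]
end

section
/- Let Y ∈ ℝ^{n×p} and ρ > 0, and let σ = λ_max(YYᵀ). Then λ_max(Yᵀ((1/ρ)I + YYᵀ)⁻¹Y) ≤ ρσ/(1 + ρσ) < 1. -/
/-!
Put `A = Y Yᵀ` and `B = ρ⁻¹ I + A`. If `Yᵀ B⁻¹ Y w = r w` with `r > 0`, then `u = B⁻¹ Y w` is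
nonzero and `A u = r B u`, i.e. `(1 - r) A u = (r / ρ) u`. Hence `u` is an eigenvector of `A` for
some `μ`, with `r = ρμ / (1 + ρμ)`. Since `A` is positive semidefinite, `0 ≤ μ ≤ σ`, and
`x ↦ x / (1 + x)` is increasing on `[0, ∞)` with values below `1`.
-/

open Matrix

lemma div_one_add_le_div_one_add {x y : ℝ} (hx : 0 ≤ x) (hxy : x ≤ y) :
    x / (1 + x) ≤ y / (1 + y) := by
  rw [div_le_div_iff₀ (by positivity) (by linarith)]
  linarith

lemma div_one_add_lt_one {x : ℝ} (hx : 0 ≤ x) : x / (1 + x) < 1 := by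
  rw [div_lt_one (by positivity)]
  linarith

namespace Matrix

variable {m n K : Type*}

lemma PosSemidef.nonneg_of_mulVec_eq_smul [Fintype n] {A : Matrix n n ℝ} (hA : A.PosSemidef)
    {v : n → ℝ} (hv : v ≠ 0) {μ : ℝ} (h : A *ᵥ v = μ • v) : 0 ≤ μ := by
  have hquad := hA.dotProduct_mulVec_nonneg v
  rw [h, star_trivial, dotProduct_smul, smul_eq_mul] at hquad
  exact nonneg_of_mul_nonneg_left hquad (dotProduct_self_star_pos_iff.mpr hv)

lemma posSemidef_mul_transpose_self [Fintype m] [Fintype n] (Y : Matrix m n ℝ) : (Y * Yᵀ).PosSemidef := by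
  simpa using posSemidef_self_mul_conjTranspose Y

lemma PosSemidef.posDef_smul_one_add [DecidableEq n] {A : Matrix n n ℝ} (hA : A.PosSemidef)
    {c : ℝ} (hc : 0 < c) : (c • (1 : Matrix n n ℝ) + A).PosDef :=
  (PosDef.one.smul hc).add_posSemidef hA

variable [Field K]

lemma exists_mulVec_eq_smul_mulVec_of_transpose_mul_inv_mul [Fintype m] [Fintype n]
    [DecidableEq m] {Y : Matrix m n K} {B : Matrix m m K} (hB : IsUnit B) {w : n → K}
    (hw : w ≠ 0) {r : K} (hr : r ≠ 0) (h : (Yᵀ * B⁻¹ * Y) *ᵥ w = r • w) :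
    ∃ u : m → K, u ≠ 0 ∧ (Y * Yᵀ) *ᵥ u = r • (B *ᵥ u) := by
  refine ⟨B⁻¹ *ᵥ Y *ᵥ w, fun hu => ?_, ?_⟩
  · have : r • w = 0 := by rw [← h, ← mulVec_mulVec, ← mulVec_mulVec, hu, mulVec_zero]
    exact smul_ne_zero hr hw this
  · rw [mulVec_mulVec (M := B), mul_nonsing_inv B ((isUnit_iff_isUnit_det B).mp hB), one_mulVec,
      ← mulVec_smul, ← h]
    simp only [mulVec_mulVec, Matrix.mul_assoc]

lemma exists_eigenvalue_of_mulVec_eq_smul_inv_smul_add [Fintype n] {A : Matrix n n K}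
    {u : n → K} (hu : u ≠ 0) {ρ r : K} (hρ : ρ ≠ 0) (h : A *ᵥ u = r • (ρ⁻¹ • u + A *ᵥ u)) :
    ∃ μ : K, A *ᵥ u = μ • u ∧ r = ρ * μ / (1 + ρ * μ) := by
  have hsolve : (1 - r) • A *ᵥ u = (r / ρ) • u := by
    rw [sub_smul, one_smul, sub_eq_iff_eq_add, div_eq_mul_inv, mul_smul, ← smul_add]
    exact h
  have hr : 1 - r ≠ 0 := by
    intro hr
    rw [hr, zero_smul, eq_comm, smul_eq_zero] at hsolve
    rw [sub_eq_zero] at hr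
    exact hsolve.elim (by simp [← hr, hρ]) hu
  refine ⟨r / (ρ * (1 - r)), ?_, ?_⟩
  · rw [← inv_smul_smul₀ hr (A *ᵥ u), hsolve, smul_smul]
    congr 1
    field_simp
  · field_simp
    ring

theorem eigenvalue_transpose_mul_inv_mul_le [Fintype m] [Fintype n] [DecidableEq m]
    {Y : Matrix m n ℝ} {ρ σ r : ℝ} (hρ : 0 < ρ) (hσ₀ : 0 ≤ σ)
    (hσ : ∀ (μ : ℝ) (v : m → ℝ), v ≠ 0 → (Y * Yᵀ) *ᵥ v = μ • v → μ ≤ σ) {w : n → ℝ} (hw : w ≠ 0)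
    (h : (Yᵀ * (ρ⁻¹ • (1 : Matrix m m ℝ) + Y * Yᵀ)⁻¹ * Y) *ᵥ w = r • w) :
    r ≤ ρ * σ / (1 + ρ * σ) := by
  rcases le_or_gt r 0 with hr | hr
  · exact hr.trans (by positivity)
  have hA := posSemidef_mul_transpose_self Y
  obtain ⟨u, hu, hAu⟩ := exists_mulVec_eq_smul_mulVec_of_transpose_mul_inv_mul
    (hA.posDef_smul_one_add (inv_pos.mpr hρ)).isUnit hw hr.ne' h
  rw [add_mulVec, smul_mulVec, one_mulVec] at hAu
  obtain ⟨μ, hμ, rfl⟩ := exists_eigenvalue_of_mulVec_eq_smul_inv_smul_add hu hρ.ne' hAu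
  exact div_one_add_le_div_one_add (mul_nonneg hρ.le (hA.nonneg_of_mulVec_eq_smul hu hμ))
    (mul_le_mul_of_nonneg_left (hσ μ u hu hμ) hρ.le)

end Matrix

theorem stmt_8 {n p : ℕ} (Y : Matrix (Fin n) (Fin p) ℝ) (ρ σ : ℝ) (hρ : 0 < ρ)
    (hσ : IsGreatest {r : ℝ | ∃ v : Fin n → ℝ, v ≠ 0 ∧ (Y * Yᵀ) *ᵥ v = r • v} σ) :
    (∀ r : ℝ,
        (∃ w : Fin p → ℝ, w ≠ 0 ∧
          (Yᵀ * (ρ⁻¹ • (1 : Matrix (Fin n) (Fin n) ℝ) + Y * Yᵀ)⁻¹ * Y) *ᵥ w = r • w) →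
        r ≤ ρ * σ / (1 + ρ * σ)) ∧
      ρ * σ / (1 + ρ * σ) < 1 := by
  obtain ⟨⟨v, hv, hσv⟩, hσ_max⟩ := hσ
  have hσ₀ : 0 ≤ σ := (posSemidef_mul_transpose_self Y).nonneg_of_mulVec_eq_smul hv hσv
  refine ⟨fun r ⟨w, hw, h⟩ => ?_, div_one_add_lt_one (by positivity)⟩
  exact eigenvalue_transpose_mul_inv_mul_le hρ hσ₀ (fun μ v hv h => hσ_max ⟨v, hv, h⟩) hw h
end

section
/- Let P ∈ ℝ^{m×m} be symmetric positive semidefinite and M ∈ ℝ^{m×n} with Null(P) ⊆ Null(Mᵀ). Then Range(Mᵀ) = Range(Mᵀ P M). -/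
/-!
If `Mᵀ P M x = 0` then the quadratic form of `P` vanishes at `M x`, so `P M x = 0` by positive
semidefiniteness; the null-space hypothesis then gives `Mᵀ M x = 0`, hence `M x = 0`. Thus
`ker (Mᵀ P M) = ker M`, and `range (Mᵀ P M) ⊆ range Mᵀ` is an inclusion of spaces of equal
dimension `n - dim ker M`.
-/

open Matrix
open scoped ComplexOrder

theorem Matrix.PosSemidef.ker_mulVecLin_conjTranspose_mul_mul {𝕜 m n : Type*} [RCLike 𝕜]
    [Fintype m] [Fintype n] {P : Matrix m m 𝕜} (hP : P.PosSemidef) (M : Matrix m n 𝕜) :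
    LinearMap.ker (Mᴴ * P * M).mulVecLin = LinearMap.ker (P * M).mulVecLin := by
  ext x
  simp only [LinearMap.mem_ker, mulVecLin_apply]
  constructor
  · intro hx
    have hquad : star (M *ᵥ x) ⬝ᵥ P *ᵥ (M *ᵥ x) = 0 := by
      rw [star_mulVec, ← dotProduct_mulVec, mulVec_mulVec, mulVec_mulVec, hx, dotProduct_zero]
    rw [← mulVec_mulVec]
    exact (hP.dotProduct_mulVec_zero_iff _).mp hquad
  · intro hx
    rw [Matrix.mul_assoc, ← mulVec_mulVec, hx, mulVec_zero]

theorem Matrix.ker_mulVecLin_mul_le_of_ker_le_ker_transpose {K m n : Type*} [Field K] [LinearOrder K]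
    [IsStrictOrderedRing K] [Fintype m] [Fintype n] {P : Matrix m m K} {M : Matrix m n K}
    (hker : LinearMap.ker P.mulVecLin ≤ LinearMap.ker Mᵀ.mulVecLin) :
    LinearMap.ker (P * M).mulVecLin ≤ LinearMap.ker M.mulVecLin := by
  rw [← ker_mulVecLin_transpose_mul_self M, mulVecLin_mul, mulVecLin_mul, LinearMap.ker_comp,
    LinearMap.ker_comp]
  exact Submodule.comap_mono hker

theorem Matrix.range_mulVecLin_transpose_mul_eq_of_ker_le {K m n : Type*} [Field K]
    [Fintype m] [Fintype n] (M : Matrix m n K) (Q : Matrix m n K)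
    (hker : LinearMap.ker (Mᵀ * Q).mulVecLin ≤ LinearMap.ker M.mulVecLin) :
    LinearMap.range (Mᵀ * Q).mulVecLin = LinearMap.range Mᵀ.mulVecLin := by
  refine Submodule.eq_of_le_of_finrank_le ?_ ?_
  · rw [mulVecLin_mul]
    exact LinearMap.range_comp_le_range _ _
  · have hM := M.mulVecLin.finrank_range_add_finrank_ker
    have hMQ := (Mᵀ * Q).mulVecLin.finrank_range_add_finrank_ker
    have hfinrank_ker := Submodule.finrank_mono hker
    change Mᵀ.rank ≤ (Mᵀ * Q).rank
    rw [rank_transpose]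
    unfold Matrix.rank
    omega

theorem stmt_12 {m n : ℕ} (P : Matrix (Fin m) (Fin m) ℝ) (M : Matrix (Fin m) (Fin n) ℝ)
    (hP : P.PosSemidef)
    (hNull : ∀ v : Fin m → ℝ, P *ᵥ v = 0 → Mᵀ *ᵥ v = 0) :
    Set.range (fun v : Fin m → ℝ => Mᵀ *ᵥ v) =
      Set.range (fun v : Fin n → ℝ => (Mᵀ * P * M) *ᵥ v) := by
  have hker : LinearMap.ker (Mᵀ * (P * M)).mulVecLin ≤ LinearMap.ker M.mulVecLin := by
    rw [← Matrix.mul_assoc, ← conjTranspose_eq_transpose_of_trivial,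
      hP.ker_mulVecLin_conjTranspose_mul_mul]
    exact ker_mulVecLin_mul_le_of_ker_le_ker_transpose hNull
  have hrange := congrArg SetLike.coe (range_mulVecLin_transpose_mul_eq_of_ker_le M _ hker)
  rw [← Matrix.mul_assoc] at hrange
  simpa only [LinearMap.coe_range, coe_mulVecLin] using hrange.symm
end

section
/- Let A ∈ ℝ^{m×n}, b = A x* for some x*, B symmetric positive definite, G symmetric positive definite, ρ > 0, S ∈ ℝ^{m×p}, and define H, Z as in the Penalty Sketch. If x_{k+1} = x_k − B⁻¹ Aᵀ S H Sᵀ (A x_k − b), then ‖x_{k+1} − x*‖²_B = ‖x_k − x*‖²_B − ‖x_k − x*‖²_Z − (1/ρ)‖H Sᵀ A (x_k − x*)‖²_G. -/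
/-!
Write `e = x_k - x*`. Since `b = A x*`, the step is `e ↦ e - B⁻¹ Z e`, and expanding the
`B`-norm with `B`, `Z` symmetric gives `‖e‖²_B - 2‖e‖²_Z + ‖e‖²_{Z B⁻¹ Z}`. With
`M = ρ⁻¹ G + Sᵀ A B⁻¹ Aᵀ S` and `H = M⁻¹`, the middle factor of `Z B⁻¹ Z` is `M - ρ⁻¹ G`, so
`H M H = H` gives `Z B⁻¹ Z = Z - ρ⁻¹ Aᵀ S H G H Sᵀ A`, whose quadratic form at `e` is
`ρ⁻¹ ‖w‖²_G`. (`H M H = H` holds for Mathlib's `⁻¹` even when `M` is singular and `H = 0`.)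
-/

open Matrix

namespace Matrix

variable {n p R : Type*} [Fintype n] [Fintype p] [CommRing R]

theorem mulVec_dotProduct_mulVec (P : Matrix p n R) (G : Matrix p p R) (e : n → R) :
    (P *ᵥ e) ⬝ᵥ (G *ᵥ (P *ᵥ e)) = e ⬝ᵥ ((Pᵀ * G * P) *ᵥ e) := by
  rw [← mulVec_mulVec, ← mulVec_mulVec, dotProduct_mulVec e, vecMul_transpose]

variable [DecidableEq n] [DecidableEq p]

theorem nonsing_inv_mul_mul_nonsing_inv (M : Matrix n n R) : M⁻¹ * M * M⁻¹ = M⁻¹ := by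
  by_cases hM : IsUnit M.det
  · rw [nonsing_inv_mul M hM, Matrix.one_mul]
  · simp [nonsing_inv_apply_not_isUnit M hM]

theorem penaltySketch_mul_nonsing_inv_mul_self (C : Matrix n p R) (B : Matrix n n R)
    (G : Matrix p p R) (c : R) :
    let H := (c • G + Cᵀ * B⁻¹ * C)⁻¹
    C * H * Cᵀ * B⁻¹ * (C * H * Cᵀ) = C * H * Cᵀ - c • (C * H * G * H * Cᵀ) := by
  intro H
  have hK : Cᵀ * B⁻¹ * C = (c • G + Cᵀ * B⁻¹ * C) - c • G := by abel
  have hHKH : H * (Cᵀ * B⁻¹ * C) * H = H - c • (H * G * H) := by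
    rw [hK, Matrix.mul_sub, Matrix.sub_mul, nonsing_inv_mul_mul_nonsing_inv, Matrix.mul_smul,
      Matrix.smul_mul]
  calc C * H * Cᵀ * B⁻¹ * (C * H * Cᵀ) = C * (H * (Cᵀ * B⁻¹ * C) * H) * Cᵀ := by
        simp only [Matrix.mul_assoc]
    _ = C * H * Cᵀ - c • (C * H * G * H * Cᵀ) := by
        rw [hHKH, Matrix.mul_sub, Matrix.sub_mul, Matrix.mul_smul, Matrix.smul_mul]
        simp only [Matrix.mul_assoc]

theorem dotProduct_mulVec_sub_nonsing_inv_mulVec (B Z : Matrix n n R) (hB : Bᵀ = B)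
    (hB_det : IsUnit B.det) (hZ : Zᵀ = Z) (e : n → R) :
    (e - B⁻¹ *ᵥ (Z *ᵥ e)) ⬝ᵥ (B *ᵥ (e - B⁻¹ *ᵥ (Z *ᵥ e))) =
      e ⬝ᵥ (B *ᵥ e) - 2 * (e ⬝ᵥ (Z *ᵥ e)) + e ⬝ᵥ ((Z * B⁻¹ * Z) *ᵥ e) := by
  have hBu : B *ᵥ (B⁻¹ *ᵥ (Z *ᵥ e)) = Z *ᵥ e := by
    rw [mulVec_mulVec, mul_nonsing_inv B hB_det, one_mulVec]
  have hsymm : ∀ u v : n → R, u ⬝ᵥ (B *ᵥ v) = v ⬝ᵥ (B *ᵥ u) := fun u v => by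
    rw [dotProduct_mulVec, ← mulVec_transpose, hB, dotProduct_comm]
  have hcross : B⁻¹ *ᵥ (Z *ᵥ e) ⬝ᵥ (B *ᵥ e) = e ⬝ᵥ (Z *ᵥ e) := by
    rw [hsymm, hBu]
  have hquad : B⁻¹ *ᵥ (Z *ᵥ e) ⬝ᵥ (Z *ᵥ e) = e ⬝ᵥ ((Z * B⁻¹ * Z) *ᵥ e) := by
    rw [dotProduct_comm, mulVec_dotProduct_mulVec, hZ]
  rw [mulVec_sub, sub_dotProduct, dotProduct_sub, dotProduct_sub, hBu, hcross, hquad]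
  ring

end Matrix

theorem stmt_16_general {m n p : ℕ} (A : Matrix (Fin m) (Fin n) ℝ) (S : Matrix (Fin m) (Fin p) ℝ)
    (B : Matrix (Fin n) (Fin n) ℝ) (G : Matrix (Fin p) (Fin p) ℝ)
    (hB : B.PosDef) (hG : G.PosDef) (ρ : ℝ)
    (xstar : Fin n → ℝ) (b : Fin m → ℝ) (hb : b = A *ᵥ xstar)
    (xk : Fin n → ℝ) :
    let H := (ρ⁻¹ • G + Sᵀ * A * B⁻¹ * Aᵀ * S)⁻¹
    let Z := Aᵀ * S * H * Sᵀ * A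
    let xk1 := xk - (B⁻¹ * Aᵀ * S * H) *ᵥ (Sᵀ *ᵥ (A *ᵥ xk - b))
    let w := (H * Sᵀ * A) *ᵥ (xk - xstar)
    (xk1 - xstar) ⬝ᵥ (B *ᵥ (xk1 - xstar)) =
      (xk - xstar) ⬝ᵥ (B *ᵥ (xk - xstar)) - (xk - xstar) ⬝ᵥ (Z *ᵥ (xk - xstar)) -
        ρ⁻¹ * (w ⬝ᵥ (G *ᵥ w)) := by
  intro H Z xk1 w
  have hB_symm : Bᵀ = B := by simpa using hB.isHermitian.eq
  have hG_symm : Gᵀ = G := by simpa using hG.isHermitian.eq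
  have hH_symm : Hᵀ = H := by
    simp only [H, transpose_nonsing_inv, transpose_add, transpose_smul, transpose_mul,
      transpose_transpose, hG_symm, hB_symm, Matrix.mul_assoc]
  have hZ_symm : Zᵀ = Z := by
    simp only [Z, transpose_mul, transpose_transpose, hH_symm, Matrix.mul_assoc]
  have hstep : xk1 - xstar = (xk - xstar) - B⁻¹ *ᵥ (Z *ᵥ (xk - xstar)) := by
    simp only [xk1, Z, hb, ← mulVec_sub, mulVec_mulVec, Matrix.mul_assoc]
    abel
  have hw :
      w ⬝ᵥ (G *ᵥ w) = (xk - xstar) ⬝ᵥ ((Aᵀ * S * H * G * H * Sᵀ * A) *ᵥ (xk - xstar)) := by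
    simp only [w, mulVec_dotProduct_mulVec, transpose_mul, transpose_transpose, hH_symm,
      Matrix.mul_assoc]
  have hZBZ : Z * B⁻¹ * Z = Z - ρ⁻¹ • (Aᵀ * S * H * G * H * Sᵀ * A) := by
    have h := penaltySketch_mul_nonsing_inv_mul_self (Aᵀ * S) B G ρ⁻¹
    simp only [Z, H, transpose_mul, transpose_transpose, Matrix.mul_assoc] at h ⊢
    exact h
  rw [hstep, dotProduct_mulVec_sub_nonsing_inv_mulVec B Z hB_symm hB.det_pos.ne'.isUnit hZ_symm,
    hZBZ, hw, sub_mulVec, smul_mulVec, dotProduct_sub, dotProduct_smul, smul_eq_mul]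
  ring

theorem stmt_16 {m n p : ℕ} (A : Matrix (Fin m) (Fin n) ℝ) (S : Matrix (Fin m) (Fin p) ℝ)
    (B : Matrix (Fin n) (Fin n) ℝ) (G : Matrix (Fin p) (Fin p) ℝ)
    (hB : B.PosDef) (hG : G.PosDef) (ρ : ℝ) (hρ : 0 < ρ)
    (xstar : Fin n → ℝ) (b : Fin m → ℝ) (hb : b = A *ᵥ xstar)
    (xk : Fin n → ℝ) :
    let H := (ρ⁻¹ • G + Sᵀ * A * B⁻¹ * Aᵀ * S)⁻¹
    let Z := Aᵀ * S * H * Sᵀ * A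
    let xk1 := xk - (B⁻¹ * Aᵀ * S * H) *ᵥ (Sᵀ *ᵥ (A *ᵥ xk - b))
    let w := (H * Sᵀ * A) *ᵥ (xk - xstar)
    (xk1 - xstar) ⬝ᵥ (B *ᵥ (xk1 - xstar)) =
      (xk - xstar) ⬝ᵥ (B *ᵥ (xk - xstar)) - (xk - xstar) ⬝ᵥ (Z *ᵥ (xk - xstar)) -
        ρ⁻¹ * (w ⬝ᵥ (G *ᵥ w)) :=
  stmt_16_general A S B G hB hG ρ xstar b hb xk
end

section
/- Let A, b, B, G, ρ, S, H, W, Z be as in the ALS method with b = A x*, and let the ALS update be z_{k+1} = H(Sᵀ A x_k − Sᵀ b + (1/ρ)G z_k), x_{k+1} = x_k − B⁻¹ Aᵀ S z_{k+1}. Then the Lyapunov function V(x, z) = ‖x − x*‖²_B + (1/ρ)‖z‖²_G satisfies V(x_{k+1}, z_{k+1}) = V(x_k, z_k) − ‖x_k − x*‖²_Z − (1/ρ)‖z_k‖²_W. -/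
/-!
Write `e = x - x*`, `M = Sᵀ A` and `K = ρ⁻¹ G + M B⁻¹ Mᵀ = H⁻¹`, so that the update reads
`K z' = M e + ρ⁻¹ G z` and `e' = e - B⁻¹ Mᵀ z'`. Expanding `‖e'‖²_B` and completing the square
in `z'` gives `V(x', z') = ‖e‖²_B - ‖M e‖²_H + ‖ρ⁻¹ G z‖²_H`. The first correction is `‖e‖²_Z`;
the second equals `ρ⁻¹ ‖z‖²_G - ρ⁻¹ ‖z‖²_W` by the Woodbury-type identity `ρ⁻¹ G H G + W = G`,
which follows from the push-through identity `G⁻¹ M F = H M B⁻¹`.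
-/

open Matrix

namespace Matrix

variable {R : Type*} [CommRing R] {m n : Type*} [Fintype m] [Fintype n]

theorem dotProduct_mulVec_comm_of_transpose_eq {K : Matrix n n R} (hK : Kᵀ = K) (x y : n → R) :
    x ⬝ᵥ (K *ᵥ y) = y ⬝ᵥ (K *ᵥ x) := by
  simpa only [hK] using dotProduct_transpose_mulVec K x y

theorem PosDef.smul_add_mul_inv_mul_transpose [DecidableEq n] {G : Matrix m m ℝ}
    {B : Matrix n n ℝ} (hG : G.PosDef) (hB : B.PosDef) {c : ℝ} (hc : 0 < c) (M : Matrix m n ℝ) :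
    (c • G + M * B⁻¹ * Mᵀ).PosDef := by
  simpa using (hG.smul hc).add_posSemidef (hB.inv.posSemidef.mul_mul_conjTranspose_same M)

variable [DecidableEq m] [DecidableEq n]

theorem sub_inv_mulVec_dotProduct_mulVec_sub_inv_mulVec {B : Matrix n n R} (hB : Bᵀ = B)
    (hBu : IsUnit B.det) (e y : n → R) :
    (e - B⁻¹ *ᵥ y) ⬝ᵥ (B *ᵥ (e - B⁻¹ *ᵥ y)) =
      e ⬝ᵥ (B *ᵥ e) - 2 * (e ⬝ᵥ y) + y ⬝ᵥ (B⁻¹ *ᵥ y) := by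
  have hBB : B *ᵥ (B⁻¹ *ᵥ y) = y := by rw [mulVec_mulVec, mul_nonsing_inv _ hBu, one_mulVec]
  have hswap := dotProduct_mulVec_comm_of_transpose_eq hB e (B⁻¹ *ᵥ y)
  rw [hBB] at hswap
  rw [mulVec_sub, hBB, sub_dotProduct, dotProduct_sub, dotProduct_sub]
  linear_combination hswap + dotProduct_comm (B⁻¹ *ᵥ y) y

theorem dotProduct_mulVec_sub_two_mul_dotProduct {K : Matrix n n R} (hK : Kᵀ = K)
    (hKu : IsUnit K.det) {u w z : n → R} (hz : K *ᵥ z = u + w) :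
    z ⬝ᵥ (K *ᵥ z) - 2 * (u ⬝ᵥ z) = w ⬝ᵥ (K⁻¹ *ᵥ w) - u ⬝ᵥ (K⁻¹ *ᵥ u) := by
  have hz' : z = K⁻¹ *ᵥ (u + w) := by rw [← hz, mulVec_mulVec, nonsing_inv_mul _ hKu, one_mulVec]
  have hcross := dotProduct_mulVec_comm_of_transpose_eq
    (by rw [transpose_nonsing_inv, hK] : K⁻¹ᵀ = K⁻¹) w u
  rw [hz, dotProduct_comm _ (u + w), hz']
  simp only [mulVec_add, dotProduct_add, add_dotProduct]
  linear_combination hcross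

theorem smul_mul_inv_mul_add_mul_inv_mul_eq {G : Matrix m m R} {B : Matrix n n R}
    (M : Matrix m n R) (V : Matrix n m R) (c : R) (hG : IsUnit G.det) (hB : IsUnit B.det)
    (hK : IsUnit (c • G + M * B⁻¹ * V).det) (hN : IsUnit (c • B + V * G⁻¹ * M).det) :
    c • (G * (c • G + M * B⁻¹ * V)⁻¹ * G) + M * (c • B + V * G⁻¹ * M)⁻¹ * V = G := by
  set K := c • G + M * B⁻¹ * V
  set N := c • B + V * G⁻¹ * M
  have hpush : G⁻¹ * M * N⁻¹ = K⁻¹ * M * B⁻¹ := by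
    have : K * (G⁻¹ * M) = M * B⁻¹ * N := by
      simp only [K, N, Matrix.add_mul, Matrix.mul_add, Matrix.smul_mul, Matrix.mul_smul,
        Matrix.mul_assoc, mul_nonsing_inv_cancel_left _ _ hG, nonsing_inv_mul _ hB, Matrix.mul_one]
    rw [← nonsing_inv_mul_cancel_left K (G⁻¹ * M) hK, this]
    simp only [Matrix.mul_assoc, mul_nonsing_inv _ hN, Matrix.mul_one]
  calc c • (G * K⁻¹ * G) + M * N⁻¹ * V
      = G * K⁻¹ * K := by
        rw [← mul_nonsing_inv_cancel_left G (M * N⁻¹ * V) hG, ← Matrix.mul_assoc G⁻¹,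
          ← Matrix.mul_assoc G⁻¹, hpush]
        simp only [K, Matrix.mul_add, Matrix.mul_smul, Matrix.mul_assoc]
    _ = G := by rw [Matrix.mul_assoc, nonsing_inv_mul _ hK, Matrix.mul_one]

theorem lyapunov_step_eq {B : Matrix n n R} {G : Matrix m m R} (M : Matrix m n R) (c : R)
    (hB : Bᵀ = B) (hG : Gᵀ = G) (hBu : IsUnit B.det) (hGu : IsUnit G.det)
    (hKu : IsUnit (c • G + M * B⁻¹ * Mᵀ).det) (hNu : IsUnit (c • B + Mᵀ * G⁻¹ * M).det)
    {e : n → R} {z z' : m → R}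
    (hz' : (c • G + M * B⁻¹ * Mᵀ) *ᵥ z' = M *ᵥ e + c • (G *ᵥ z)) :
    (e - B⁻¹ *ᵥ (Mᵀ *ᵥ z')) ⬝ᵥ (B *ᵥ (e - B⁻¹ *ᵥ (Mᵀ *ᵥ z'))) + c * (z' ⬝ᵥ (G *ᵥ z')) =
      e ⬝ᵥ (B *ᵥ e) + c * (z ⬝ᵥ (G *ᵥ z))
        - e ⬝ᵥ ((Mᵀ * (c • G + M * B⁻¹ * Mᵀ)⁻¹ * M) *ᵥ e)
        - c * (z ⬝ᵥ ((M * (c • B + Mᵀ * G⁻¹ * M)⁻¹ * Mᵀ) *ᵥ z)) := by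
  set K := c • G + M * B⁻¹ * Mᵀ
  have hK : Kᵀ = K := by
    simp only [K, transpose_add, transpose_smul, transpose_mul, transpose_transpose, hG,
      transpose_nonsing_inv, hB, Matrix.mul_assoc]
  have energy : (e - B⁻¹ *ᵥ (Mᵀ *ᵥ z')) ⬝ᵥ (B *ᵥ (e - B⁻¹ *ᵥ (Mᵀ *ᵥ z')))
      + c * (z' ⬝ᵥ (G *ᵥ z')) = e ⬝ᵥ (B *ᵥ e) + (z' ⬝ᵥ (K *ᵥ z') - 2 * ((M *ᵥ e) ⬝ᵥ z')) := by
    rw [sub_inv_mulVec_dotProduct_mulVec_sub_inv_mulVec hB hBu, dotProduct_transpose_mulVec,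
      dotProduct_comm (Mᵀ *ᵥ z'), dotProduct_transpose_mulVec]
    simp only [K, add_mulVec, smul_mulVec, ← mulVec_mulVec, dotProduct_add, dotProduct_smul,
      smul_eq_mul, dotProduct_comm (M *ᵥ e)]
    ring
  have hu : (M *ᵥ e) ⬝ᵥ (K⁻¹ *ᵥ (M *ᵥ e)) = e ⬝ᵥ ((Mᵀ * K⁻¹ * M) *ᵥ e) := by
    rw [← mulVec_mulVec, ← mulVec_mulVec, dotProduct_transpose_mulVec, dotProduct_comm]
  have hw : (c • (G *ᵥ z)) ⬝ᵥ (K⁻¹ *ᵥ (c • (G *ᵥ z)))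
      = c * (z ⬝ᵥ (G *ᵥ z)) - c * (z ⬝ᵥ ((M * (c • B + Mᵀ * G⁻¹ * M)⁻¹ * Mᵀ) *ᵥ z)) := by
    have hGKG : c • (G * K⁻¹ * G) = G - M * (c • B + Mᵀ * G⁻¹ * M)⁻¹ * Mᵀ :=
      eq_sub_of_add_eq (smul_mul_inv_mul_add_mul_inv_mul_eq M Mᵀ c hGu hBu hKu hNu)
    rw [← mul_sub, ← dotProduct_sub, ← sub_mulVec, ← hGKG, smul_mulVec, dotProduct_smul,
      ← mulVec_mulVec, ← mulVec_mulVec, ← dotProduct_mulVec_comm_of_transpose_eq hG,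
      mulVec_smul, smul_dotProduct, dotProduct_smul, dotProduct_comm (K⁻¹ *ᵥ _), smul_eq_mul,
      smul_eq_mul]
  rw [energy, dotProduct_mulVec_sub_two_mul_dotProduct hK hKu hz', hu, hw]
  ring

end Matrix

theorem stmt_17 {m n p : ℕ} (A : Matrix (Fin m) (Fin n) ℝ) (S : Matrix (Fin m) (Fin p) ℝ)
    (B : Matrix (Fin n) (Fin n) ℝ) (G : Matrix (Fin p) (Fin p) ℝ)
    (hB : B.PosDef) (hG : G.PosDef) (ρ : ℝ) (hρ : 0 < ρ)
    (xstar : Fin n → ℝ) (b : Fin m → ℝ) (hb : b = A *ᵥ xstar)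
    (xk : Fin n → ℝ) (zk : Fin p → ℝ) :
    let H := (ρ⁻¹ • G + Sᵀ * A * B⁻¹ * Aᵀ * S)⁻¹
    let Z := Aᵀ * S * H * Sᵀ * A
    let F := (ρ⁻¹ • B + Aᵀ * S * G⁻¹ * Sᵀ * A)⁻¹
    let W := Sᵀ * A * F * Aᵀ * S
    let zk1 := H *ᵥ (Sᵀ *ᵥ (A *ᵥ xk) - Sᵀ *ᵥ b + ρ⁻¹ • (G *ᵥ zk))
    let xk1 := xk - (B⁻¹ * Aᵀ * S) *ᵥ zk1
    let V : (Fin n → ℝ) → (Fin p → ℝ) → ℝ := fun x z =>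
      (x - xstar) ⬝ᵥ (B *ᵥ (x - xstar)) + ρ⁻¹ * (z ⬝ᵥ (G *ᵥ z))
    V xk1 zk1 =
      V xk zk - (xk - xstar) ⬝ᵥ (Z *ᵥ (xk - xstar)) - ρ⁻¹ * (zk ⬝ᵥ (W *ᵥ zk)) := by
  intro H Z F W zk1 xk1 V
  have hc : 0 < ρ⁻¹ := inv_pos.mpr hρ
  have hK := hG.smul_add_mul_inv_mul_transpose hB hc (Sᵀ * A)
  have hN : (ρ⁻¹ • B + (Sᵀ * A)ᵀ * G⁻¹ * (Sᵀ * A)).PosDef := by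
    simpa using hB.smul_add_mul_inv_mul_transpose hG hc (Sᵀ * A)ᵀ
  have hKeq : ρ⁻¹ • G + Sᵀ * A * B⁻¹ * (Sᵀ * A)ᵀ = ρ⁻¹ • G + Sᵀ * A * B⁻¹ * Aᵀ * S := by
    rw [transpose_mul, transpose_transpose, ← Matrix.mul_assoc]
  have hz : (ρ⁻¹ • G + Sᵀ * A * B⁻¹ * (Sᵀ * A)ᵀ) *ᵥ zk1
      = (Sᵀ * A) *ᵥ (xk - xstar) + ρ⁻¹ • (G *ᵥ zk) := by
    have hKu := hK.det_pos.ne'.isUnit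
    rw [hKeq] at hKu ⊢
    simp only [zk1, H, mulVec_mulVec, mul_nonsing_inv _ hKu, one_mulVec, hb, mulVec_sub]
  have key := lyapunov_step_eq (Sᵀ * A) ρ⁻¹ (isHermitian_iff_isSymm.mp hB.isHermitian).eq
    (isHermitian_iff_isSymm.mp hG.isHermitian).eq hB.det_pos.ne'.isUnit hG.det_pos.ne'.isUnit
    hK.det_pos.ne'.isUnit hN.det_pos.ne'.isUnit hz
  have hx : xk1 - xstar = xk - xstar - B⁻¹ *ᵥ ((Sᵀ * A)ᵀ *ᵥ zk1) := by
    simp only [xk1, sub_right_comm, transpose_mul, transpose_transpose, ← mulVec_mulVec]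
  show (xk1 - xstar) ⬝ᵥ (B *ᵥ (xk1 - xstar)) + ρ⁻¹ * (zk1 ⬝ᵥ (G *ᵥ zk1)) = _
  rw [hx, key]
  simp only [Z, W, H, F, transpose_mul, transpose_transpose, Matrix.mul_assoc]
  rfl
end
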